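/- Let (K,U) be a coherent accessible category with concrete directed colimits in which all morphisms are monomorphisms preserved by U, and let λ be a sufficiently large regular cardinal (with monster objects available). If K is λ-saturated in the injectivity sense, then every object K that is λ-saturated is λ-Galois saturated: for every g : M → K with M λ-presentable and every type (f,a) over M, there exists b ∈ U(K) such that (f,a) and (g,b) are equivalent. -/

import Mathlib

open CategoryTheory Limits Opposite

universe u u₂ u₃

/-- A preorder is `κ`-directed if every subset of cardinality `< κ` has an upper bound. -/
def IsCardDirected (κ : Cardinal.{u}) (J : Type u) [Preorder J] : Prop :=
  ∀ S : Set J, Cardinal.mk S < κ → ∃ b, ∀ a ∈ S, a ≤ b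

/-- An object `K` is `κ`-presentable if its hom-functor preserves `κ`-directed colimits. -/
def IsPresentable (κ : Cardinal.{u}) {C : Type u₂} [Category.{u} C] (K : C) : Prop :=
  ∀ (J : Type u) [Preorder J], IsCardDirected κ J →
    Nonempty (PreservesColimitsOfShape J (coyoneda.obj (op K)))

/-- A category has (all) directed colimits. -/
def HasDirectedColimits (C : Type u₂) [Category.{u} C] : Prop :=
  ∀ (J : Type u) [Preorder J], IsCardDirected Cardinal.aleph0 J → HasColimitsOfShape J C

/-- A presentation of `X` as a `κ`-directed colimit of objects from `S`. -/
structure DirectedColimitPresentation (κ : Cardinal.{u}) {C : Type u₂} [Category.{u} C]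
    (S : Set C) (X : C) where
  J : Type u
  [inst : Preorder J]
  directed : IsCardDirected κ J
  D : J ⥤ C
  mem : ∀ j, D.obj j ∈ S
  cocone : Cocone D
  isColimit : IsColimit cocone
  iso : cocone.pt ≅ X

attribute [instance] DirectedColimitPresentation.inst

/-- `C` is a `κ`-accessible category. -/
structure IsAccessible (κ : Cardinal.{u}) (C : Type u₂) [Category.{u} C] : Prop where
  hasColimits : ∀ (J : Type u) [Preorder J], IsCardDirected κ J → HasColimitsOfShape J C
  generators : ∃ S : Set C, (∀ A ∈ S, IsPresentable κ A) ∧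
    ∀ X : C, Nonempty (DirectedColimitPresentation κ S X)

/-- A functor preserves (all) directed colimits. -/
def PreservesDirectedColimits {C : Type u₂} [Category.{u} C] {D : Type u₃} [Category.{u} D]
    (F : C ⥤ D) : Prop :=
  ∀ (J : Type u) [Preorder J], IsCardDirected Cardinal.aleph0 J →
    Nonempty (PreservesColimitsOfShape J F)

/-- Coherence of a concrete structure functor `U`. -/
def Coherent {C : Type u₂} [Category.{u} C] (U : C ⥤ Type u) : Prop :=
  ∀ {A B Z : C} (h : A ⟶ Z) (g : B ⟶ Z) (f : U.obj A → U.obj B),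
    U.map g ∘ f = U.map h → ∃ fbar : A ⟶ B, U.map fbar = f

/-- Equivalence of types `(f₀,a₀)` and `(f₁,a₁)` over `M`. -/
def TypesEquiv {C : Type u₂} [Category.{u} C] (U : C ⥤ Type u) {M N₀ N₁ : C}
    (f₀ : M ⟶ N₀) (a₀ : U.obj N₀) (f₁ : M ⟶ N₁) (a₁ : U.obj N₁) : Prop :=
  ∃ (N : C) (h₀ : N₀ ⟶ N) (h₁ : N₁ ⟶ N),
    f₀ ≫ h₀ = f₁ ≫ h₁ ∧ U.map h₀ a₀ = U.map h₁ a₁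

/-- The amalgamation property. -/
def AmalgamationProperty (C : Type u₂) [Category.{u} C] : Prop :=
  ∀ {K L M : C} (f : K ⟶ L) (g : K ⟶ M),
    ∃ (N : C) (u : L ⟶ N) (v : M ⟶ N), f ≫ u = g ≫ v

/-- The joint embedding property. -/
def JointEmbeddingProperty (C : Type u₂) [Category.{u} C] : Prop :=
  ∀ K L : C, ∃ (N : C) (_ : K ⟶ N) (_ : L ⟶ N), True

/-- `L` is `λ`-saturated: injective w.r.t. morphisms between `λ`-presentable objects. -/
def IsSaturated (κ : Cardinal.{u}) {C : Type u₂} [Category.{u} C] (L : C) : Prop :=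
  ∀ {A B : C}, IsPresentable κ A → IsPresentable κ B →
    ∀ (f : A ⟶ L) (g : A ⟶ B), ∃ h : B ⟶ L, g ≫ h = f

/-- `K` has size `c`: its presentability rank is the successor cardinal `c⁺`. -/
def SizeIs (c : Cardinal.{u}) {C : Type u₂} [Category.{u} C] (K : C) : Prop :=
  IsPresentable (Order.succ c) K ∧ ∀ κ, Cardinal.IsRegular κ → κ ≤ c → ¬ IsPresentable κ K

/-!
Write `N` as a `κ`-directed colimit of `κ`-presentable objects `D j`. Regrouping, `N` is also the
`λ`-directed colimit of the colimits of `D` over the directed subsets of the index poset of size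
`< λ`, and these are `λ`-presentable. As `M` is `λ`-presentable and `U` preserves directed
colimits, `f` and `a` both come from a single such stage `e : N₀ ⟶ N`: `f = f₀ ≫ e` and
`a = U e a₀`. Saturation of `K` extends `g` along `f₀` to some `h : N₀ ⟶ K`, and amalgamating `e`
and `h` over `N₀` shows that `(f, a)` is equivalent to `(g, U h a₀)`.
-/

section DirectedSubsets

open Cardinal

variable {J : Type u} [Preorder J]

theorem IsCardDirected.mono {κ κ' : Cardinal.{u}} (h : κ' ≤ κ) (hd : IsCardDirected κ J) :
    IsCardDirected κ' J :=
  fun S hS => hd S (hS.trans_le h)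

theorem isCardDirected_aleph0_iff : IsCardDirected ℵ₀ J ↔ Nonempty J ∧ IsDirectedOrder J := by
  refine ⟨fun h => ⟨?_, ⟨fun a b => ?_⟩⟩, fun ⟨_, _⟩ S hS => ?_⟩
  · obtain ⟨j, -⟩ := h ∅ (by simp [aleph0_pos])
    exact ⟨j⟩
  · obtain ⟨c, hc⟩ := h {a, b} (Set.toFinite _).lt_aleph0
    exact ⟨c, hc a (by simp), hc b (by simp)⟩
  · have hS : S.Finite := lt_aleph0_iff_set_finite.1 hS
    obtain ⟨j, hj⟩ := hS.toFinset.exists_le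
    exact ⟨j, fun a ha => hj a (hS.mem_toFinset.2 ha)⟩

theorem isCardDirected_aleph0_of_directedOn {S : Set J} (hne : S.Nonempty)
    (hd : DirectedOn (· ≤ ·) S) : IsCardDirected ℵ₀ S :=
  isCardDirected_aleph0_iff.2 ⟨hne.to_subtype, hd.isDirectedOrder⟩

theorem IsCardDirected.isCardinalFiltered {κ : Cardinal.{u}} [Fact κ.IsRegular]
    (h : IsCardDirected κ J) : IsCardinalFiltered J κ :=
  isCardinalFiltered_preorder J κ fun _ s hs =>
    let ⟨j, hj⟩ := h (Set.range s) (mk_range_le.trans_lt hs)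
    ⟨j, fun k => hj _ ⟨k, rfl⟩⟩

def smallDirectedSets (κ : Cardinal.{u}) (J : Type u) [Preorder J] : Set (Set J) :=
  {S | S.Nonempty ∧ DirectedOn (· ≤ ·) S ∧ #S < κ}

theorem singleton_mem_smallDirectedSets {κ : Cardinal.{u}} (hκ : ℵ₀ ≤ κ) (j : J) :
    {j} ∈ smallDirectedSets κ J :=
  ⟨Set.singleton_nonempty j, directedOn_singleton j, by simpa using one_lt_aleph0.trans_le hκ⟩

theorem exists_directedOn_superset_of_aleph0_le [IsDirectedOrder J] {T : Set J}
    (hT : ℵ₀ ≤ #T) : ∃ S, T ⊆ S ∧ DirectedOn (· ≤ ·) S ∧ #S ≤ #T := by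
  choose ub le_ub_left le_ub_right using fun a b : J => exists_ge_ge a b
  let step : Set J → Set J := fun A => A ∪ Set.image2 ub A A
  let T' : ℕ → Set J := fun n => step^[n] T
  have hT'succ (n : ℕ) : T' (n + 1) = step (T' n) := Function.iterate_succ_apply' _ _ _
  have hmono : Monotone T' :=
    monotone_nat_of_le_succ fun n => (hT'succ n).symm ▸ Set.subset_union_left
  have hcard (n : ℕ) : #(T' n) ≤ #T := by
    induction n with
    | zero => exact le_rfl
    | succ n ih =>
      rw [hT'succ]
      calc #(step (T' n)) ≤ #(T' n) + #(T' n) * #(T' n) :=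
            (mk_union_le _ _).trans (add_le_add le_rfl mk_image2_le)
        _ ≤ #T + #T * #T := by gcongr
        _ = #T := by rw [mul_eq_self hT, add_eq_self hT]
  refine ⟨⋃ n, T' n, Set.subset_iUnion T' 0, fun a ha b hb => ?_, ?_⟩
  · obtain ⟨m, ham⟩ := Set.mem_iUnion.1 ha
    obtain ⟨n, hbn⟩ := Set.mem_iUnion.1 hb
    obtain ⟨k, hmk, hnk⟩ := exists_ge_ge m n
    refine ⟨ub a b, Set.mem_iUnion.2 ⟨k + 1, ?_⟩, le_ub_left a b, le_ub_right a b⟩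
    rw [hT'succ]
    exact Or.inr (Set.mem_image2_of_mem (hmono hmk ham) (hmono hnk hbn))
  · have := mk_iUnion_le_lift T'
    simp only [lift_uzero, mk_nat, lift_aleph0] at this
    calc #(⋃ n, T' n) ≤ ℵ₀ * ⨆ n, #(T' n) := this
      _ ≤ #T * #T := mul_le_mul' hT (ciSup_le' hcard)
      _ = #T := mul_eq_self hT

theorem exists_superset_mem_smallDirectedSets [Nonempty J] [IsDirectedOrder J]
    {κ : Cardinal.{u}} (hκ : ℵ₀ ≤ κ) {T : Set J} (hT : #T < κ) :
    ∃ S ∈ smallDirectedSets κ J, T ⊆ S := by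
  rcases lt_or_ge #T ℵ₀ with hfin | hinf
  -- a single upper bound: closing a finite `T` under binary bounds may make it too big if `κ = ℵ₀`
  · have hT : T.Finite := lt_aleph0_iff_set_finite.1 hfin
    obtain ⟨j, hj⟩ := hT.toFinset.exists_le
    have hle : ∀ a ∈ insert j T, a ≤ j :=
      Set.forall_mem_insert.2 ⟨le_rfl, fun a ha => hj a (hT.mem_toFinset.2 ha)⟩
    exact ⟨insert j T, ⟨Set.insert_nonempty j T,
      fun a ha b hb => ⟨j, Set.mem_insert j T, hle a ha, hle b hb⟩,
      (hT.insert j).lt_aleph0.trans_le hκ⟩, Set.subset_insert j T⟩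
  · obtain ⟨S, hTS, hS, hcard⟩ := exists_directedOn_superset_of_aleph0_le hinf
    have hTne : T.Nonempty :=
      Set.nonempty_coe_sort.1 (mk_ne_zero_iff.1 (aleph0_pos.trans_le hinf).ne')
    exact ⟨S, ⟨hTne.mono hTS, hS, hcard.trans_lt hT⟩, hTS⟩

theorem isCardDirected_smallDirectedSets [Nonempty J] [IsDirectedOrder J] {κ : Cardinal.{u}}
    (hκ : κ.IsRegular) : IsCardDirected κ (smallDirectedSets κ J) := by
  intro W hW
  have hunion : #(⋃ S : W, (S : Set J)) < κ :=
    mk_iUnion_le_sum_mk.trans_lt (sum_lt_of_isRegular hκ hW fun S => S.1.2.2.2)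
  obtain ⟨S, hS, hsub⟩ := exists_superset_mem_smallDirectedSets hκ.aleph0_le hunion
  exact ⟨⟨S, hS⟩, fun S' hS' => (Set.subset_iUnion (fun S : W => (S : Set J)) ⟨S', hS'⟩).trans hsub⟩

theorem hasCardinalLT_arrow_of_preorder {P : Type u} [Preorder P] {κ : Cardinal.{u}}
    (hκ : ℵ₀ ≤ κ) (h : HasCardinalLT P κ) : HasCardinalLT (Arrow P) κ :=
  (hasCardinalLT_prod' hκ h h).of_injective (fun f => (f.left, f.right)) fun _ _ hfg =>
    Arrow.ext (congrArg Prod.fst hfg) (congrArg Prod.snd hfg) (Subsingleton.elim _ _)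

end DirectedSubsets

section Presentable

variable {C : Type u₂} [Category.{u} C]

theorem IsPresentable.mono {κ κ' : Cardinal.{u}} {X : C} (hX : IsPresentable κ X) (h : κ ≤ κ') :
    IsPresentable κ' X :=
  fun J _ hJ => hX J (hJ.mono h)

theorem isPresentable_of_isColimit {κ : Cardinal.{u}} (hκ : κ.IsRegular) {K : Type u}
    [SmallCategory K] (hK : HasCardinalLT (Arrow K) κ) {Y : K ⥤ C} {c : Cocone Y}
    (hc : IsColimit c) (hY : ∀ k, IsPresentable κ (Y.obj k)) : IsPresentable κ c.pt := by
  have : Fact κ.IsRegular := ⟨hκ⟩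
  intro J _ hJ
  have := hJ.isCardinalFiltered
  refine ⟨⟨fun {X} => ⟨fun {cX} hcX => ⟨?_⟩⟩⟩⟩
  refine Functor.Accessible.Limits.isColimitMapCocone (coyoneda.mapCone c.op)
    (fun Z => isLimitOfPreserves ((evaluation _ _).obj Z) (isLimitOfPreserves coyoneda hc.op)) κ
    ((hasCardinalLT_arrow_op_iff K κ).2 hK) cX fun k => ?_
  have := (hY k.unop J hJ).some
  exact isColimitOfPreserves (coyoneda.obj (op (Y.obj k.unop))) hcX

end Presentable

section SubdiagramColimits

variable {C : Type u₂} [Category.{u} C] {J : Type u} [Preorder J] (D : J ⥤ C)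

-- Spelled out rather than as `Monotone.functor _ ⋙ D`, so that the objects of different
-- subdiagrams at the same index are reducibly `D.obj j`, which `simp` relies on below.
abbrev subdiagram (S : Set J) : S ⥤ C where
  obj s := D.obj s
  map f := D.map (homOfLE (leOfHom f))
  map_id s := D.map_id s
  map_comp f g := D.map_comp (homOfLE (leOfHom f)) (homOfLE (leOfHom g))

variable (𝒮 : Set (Set J)) [∀ S : 𝒮, HasColimit (subdiagram D S.1)]

noncomputable abbrev subdiagramColimits : 𝒮 ⥤ C where
  obj S := colimit (subdiagram D S.1)
  map {S S'} h := colimit.desc (subdiagram D S.1)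
    { pt := colimit (subdiagram D S'.1)
      ι :=
        { app s := colimit.ι (subdiagram D S'.1) ⟨s, h.le s.2⟩
          naturality s t φ :=
            (colimit.w (subdiagram D S'.1) (homOfLE (leOfHom φ) :
              (⟨s, h.le s.2⟩ : S'.1) ⟶ ⟨t, h.le t.2⟩)).trans (Category.comp_id _).symm } }
  map_id S := colimit.hom_ext fun s => by simp
  map_comp f g := colimit.hom_ext fun s => by simp

@[simp]
lemma ι_subdiagramColimits_map {S S' : 𝒮} (h : S ⟶ S') (s : S.1) :
    colimit.ι (subdiagram D S.1) s ≫ (subdiagramColimits D 𝒮).map h =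
      colimit.ι (subdiagram D S'.1) ⟨s, h.le s.2⟩ :=
  colimit.ι_desc _ _

noncomputable abbrev subdiagramColimitsCocone (c : Cocone D) :
    Cocone (subdiagramColimits D 𝒮) where
  pt := c.pt
  ι :=
    { app S := colimit.desc (subdiagram D S.1)
        ⟨c.pt, fun s => c.ι.app s, fun _ _ _ => (c.w _).trans (Category.comp_id _).symm⟩
      naturality S S' h := colimit.hom_ext fun s => by simp [subdiagramColimits] }

variable {𝒮} [IsDirectedOrder 𝒮]

lemma ι_comp_cocone_app_eq (E : Cocone (subdiagramColimits D 𝒮)) {S S' : 𝒮} {j : J} (hj : j ∈ S.1)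
    (hj' : j ∈ S'.1) :
    colimit.ι (subdiagram D S.1) ⟨j, hj⟩ ≫ E.ι.app S =
      colimit.ι (subdiagram D S'.1) ⟨j, hj'⟩ ≫ E.ι.app S' := by
  obtain ⟨T, hST, hS'T⟩ := exists_ge_ge S S'
  rw [← E.w (homOfLE hST), ← E.w (homOfLE hS'T), ← Category.assoc, ← Category.assoc,
    ι_subdiagramColimits_map, ι_subdiagramColimits_map]

variable {σ : J → 𝒮} (hσ : ∀ j, j ∈ (σ j).1)

noncomputable abbrev coconeOfSubdiagramColimits (E : Cocone (subdiagramColimits D 𝒮)) :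
    Cocone D where
  pt := E.pt
  ι :=
    { app j := colimit.ι (subdiagram D (σ j).1) ⟨j, hσ j⟩ ≫ E.ι.app (σ j)
      naturality j j' φ := by
        obtain ⟨T, hjT, hj'T⟩ := exists_ge_ge (σ j) (σ j')
        have hj : j ∈ T.1 := hjT (hσ j)
        have hj' : j' ∈ T.1 := hj'T (hσ j')
        rw [ι_comp_cocone_app_eq D E _ hj, ι_comp_cocone_app_eq D E _ hj']
        have hw :=
          colimit.w (subdiagram D T.1) (homOfLE (leOfHom φ) : (⟨j, hj⟩ : T.1) ⟶ ⟨j', hj'⟩)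
        exact (Category.assoc _ _ _).symm.trans
          ((congrArg (· ≫ E.ι.app T) hw).trans (Category.comp_id _).symm) }

noncomputable def isColimitSubdiagramColimitsCocone {c : Cocone D} (hc : IsColimit c) :
    IsColimit (subdiagramColimitsCocone D 𝒮 c) where
  desc E := hc.desc (coconeOfSubdiagramColimits D hσ E)
  fac E S := colimit.hom_ext fun s => by
    rw [← Category.assoc, colimit.ι_desc]
    exact (hc.fac _ s).trans (ι_comp_cocone_app_eq D E (hσ s) s.2)
  uniq E m hm := hc.hom_ext fun j => by
    rw [hc.fac]
    dsimp only
    rw [← hm, ← Category.assoc, colimit.ι_desc]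

end SubdiagramColimits

namespace DirectedColimitPresentation

open Cardinal

variable {C : Type u₂} [Category.{u} C] {κ : Cardinal.{u}} {S : Set C} {X : C}

theorem nonempty_of_isPresentable (P : DirectedColimitPresentation κ S X) (hκ : ℵ₀ ≤ κ)
    (hdir : HasDirectedColimits C) {lam : Cardinal.{u}} (hlam : lam.IsRegular)
    (hS : ∀ A ∈ S, IsPresentable lam A) :
    Nonempty (DirectedColimitPresentation lam {A | IsPresentable lam A} X) := by
  obtain ⟨_, _⟩ := isCardDirected_aleph0_iff.1 (P.directed.mono hκ)
  have hdirected := isCardDirected_smallDirectedSets (J := P.J) hlam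
  have := (isCardDirected_aleph0_iff.1 (hdirected.mono hlam.aleph0_le)).2
  have (T : smallDirectedSets lam P.J) : HasColimitsOfShape T.1 C :=
    hdir _ (isCardDirected_aleph0_of_directedOn T.2.1 T.2.2.1)
  exact ⟨{
    J := smallDirectedSets lam P.J
    directed := hdirected
    D := subdiagramColimits P.D _
    mem T := isPresentable_of_isColimit hlam
      (hasCardinalLT_arrow_of_preorder hlam.aleph0_le
        ((hasCardinalLT_iff_cardinal_mk_lt _ _).2 T.2.2.2))
      (colimit.isColimit _) fun s => hS _ (P.mem s)
    cocone := subdiagramColimitsCocone P.D _ P.cocone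
    isColimit := isColimitSubdiagramColimitsCocone P.D
      (σ := fun j => ⟨{j}, singleton_mem_smallDirectedSets hlam.aleph0_le j⟩) (fun j => rfl)
      P.isColimit
    iso := P.iso }⟩

theorem exists_factorization (P : DirectedColimitPresentation κ S X) (hκ : ℵ₀ ≤ κ)
    {U : C ⥤ Type u} (hU : PreservesDirectedColimits U) {M : C} (hM : IsPresentable κ M)
    (f : M ⟶ X) (a : U.obj X) :
    ∃ (j : P.J) (f₀ : M ⟶ P.D.obj j) (a₀ : U.obj (P.D.obj j)),
      f₀ ≫ P.cocone.ι.app j ≫ P.iso.hom = f ∧ U.map (P.cocone.ι.app j ≫ P.iso.hom) a₀ = a := by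
  have hdirected := P.directed.mono hκ
  obtain ⟨_, _⟩ := isCardDirected_aleph0_iff.1 hdirected
  have := (hM _ P.directed).some
  have := (hU _ hdirected).some
  obtain ⟨j₁, f₁, hf₁⟩ := Types.jointly_surjective_of_isColimit
    (isColimitOfPreserves (coyoneda.obj (op M)) P.isColimit) (f ≫ P.iso.inv)
  obtain ⟨j₂, a₂, ha₂⟩ := Types.jointly_surjective_of_isColimit
    (isColimitOfPreserves U P.isColimit) (U.map P.iso.inv a)
  obtain ⟨j, h₁, h₂⟩ := exists_ge_ge j₁ j₂
  refine ⟨j, f₁ ≫ P.D.map (homOfLE h₁), U.map (P.D.map (homOfLE h₂)) a₂, ?_, ?_⟩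
  · have hf₁ : f₁ ≫ P.cocone.ι.app j₁ = f ≫ P.iso.inv := hf₁
    rw [Category.assoc, P.cocone.w_assoc, ← Category.assoc, hf₁, Category.assoc, Iso.inv_hom_id,
      Category.comp_id]
  · have ha₂ : U.map (P.cocone.ι.app j₂) a₂ = U.map P.iso.inv a := ha₂
    rw [← Functor.map_comp_apply, P.cocone.w_assoc, Functor.map_comp_apply, ha₂,
      ← Functor.map_comp_apply, Iso.inv_hom_id, Functor.map_id_apply]

end DirectedColimitPresentation

theorem AmalgamationProperty.typesEquiv {C : Type u₂} [Category.{u} C]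
    (hamalg : AmalgamationProperty C) (U : C ⥤ Type u) {M N₀ N K : C} (f₀ : M ⟶ N₀) (e : N₀ ⟶ N)
    (h : N₀ ⟶ K) (a₀ : U.obj N₀) : TypesEquiv U (f₀ ≫ e) (U.map e a₀) (f₀ ≫ h) (U.map h a₀) := by
  obtain ⟨Q, p, q, hpq⟩ := hamalg e h
  refine ⟨Q, p, q, by rw [Category.assoc, hpq, Category.assoc], ?_⟩
  rw [← Functor.map_comp_apply, hpq, Functor.map_comp_apply]

theorem stmt15_general (C : Type u₂) [Category.{u} C] (κ : Cardinal.{u}) (hκ : κ.IsRegular)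
    (hacc : IsAccessible κ C) (hdir : HasDirectedColimits C)
    (U : C ⥤ Type u) (hU : PreservesDirectedColimits U)
    (hamalg : AmalgamationProperty C)
    (lam : Cardinal.{u}) (hlam : lam.IsRegular) (hbig : κ ≤ lam)
    (K : C) (hKsat : IsSaturated lam K) :
    ∀ (M : C), IsPresentable lam M → ∀ (g : M ⟶ K) (N : C) (f : M ⟶ N) (a : U.obj N),
      ∃ b : U.obj K, TypesEquiv U f a g b := by
  intro M hM g N f a
  obtain ⟨S, hS, hpres⟩ := hacc.generators
  obtain ⟨P⟩ := (hpres N).some.nonempty_of_isPresentable hκ.aleph0_le hdir hlam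
    fun A hA => (hS A hA).mono hbig
  obtain ⟨j, f₀, a₀, rfl, rfl⟩ := P.exists_factorization hlam.aleph0_le hU hM f a
  obtain ⟨h, rfl⟩ := hKsat hM (P.mem j) g f₀
  exact ⟨_, hamalg.typesEquiv U f₀ _ h a₀⟩

/-- Easy direction of Proposition 6.2: in a coherent accessible category with concrete directed
colimits whose morphisms are concrete monomorphisms (with AP, JEP and monster cardinals
available), every `λ`-saturated object is `λ`-Galois saturated: for every `g : M ⟶ K` with `M`
`λ`-presentable and every type `(f,a)` over `M` there is `b ∈ U(K)` with `(f,a)` equivalent to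
`(g,b)`. -/
theorem stmt15 (C : Type u₂) [Category.{u} C] (κ : Cardinal.{u}) (hκ : κ.IsRegular)
    (hacc : IsAccessible κ C) (hdir : HasDirectedColimits C)
    (U : C ⥤ Type u) (hfaith : U.Faithful) (hU : PreservesDirectedColimits U)
    (hcoh : Coherent U)
    (hmono : ∀ {A B : C} (f : A ⟶ B), Mono f ∧ Function.Injective (U.map f))
    (hamalg : AmalgamationProperty C) (hjep : JointEmbeddingProperty C)
    (hmonster : ∀ μ : Cardinal.{u}, ∃ ν : Cardinal.{u}, μ ≤ ν ∧ ν.IsRegular ∧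
      Cardinal.powerlt ν ν = ν)
    (lam : Cardinal.{u}) (hlam : lam.IsRegular) (hbig : κ ≤ lam)
    (K : C) (hKsat : IsSaturated lam K) :
    ∀ (M : C), IsPresentable lam M → ∀ (g : M ⟶ K) (N : C) (f : M ⟶ N) (a : U.obj N),
      ∃ b : U.obj K, TypesEquiv U f a g b :=
  stmt15_general C κ hκ hacc hdir U hU hamalg lam hlam hbig K hKsat
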